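/- arXiv:2507.22203 — 2 statements merged into one kernel-verified Lean document; each statement's English description precedes it below -/
import Mathlib

section
/- For every integer k ≥ 3 and every prime D ≥ 3, one has Ψ_k^2(D) ≤ 8π^{3/2} · (2π/D)^{k−1} · ζ(k − 1/2)² / Γ(k − 1/2), where ζ is the Riemann zeta function and Γ is the Gamma function. -/
/-- The J-Bessel function `J_ν(x)`, defined for real `ν ≥ 0` and `x > 0` by
`J_ν(x) = (2(x/2)^ν / (Γ(ν+1/2)Γ(1/2))) ∫_0^{π/2} sin(θ)^{2ν} cos(x cos θ) dθ`. -/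
noncomputable def besselJ (ν x : ℝ) : ℝ :=
  2 * (x / 2) ^ ν / (Real.Gamma (ν + 1 / 2) * Real.Gamma (1 / 2)) *
    ∫ θ in (0 : ℝ)..(Real.pi / 2), Real.sin θ ^ (2 * ν) * Real.cos (x * Real.cos θ)

/-- The Kloosterman sum `S(m, n; c) = Σ_{x ∈ (ℤ/cℤ)ˣ} e((mx + n x̄)/c)`. -/
noncomputable def klSum (m n : ℤ) (c : ℕ) : ℂ :=
  ∑ x ∈ Finset.filter (fun x => Nat.Coprime x c) (Finset.range c),
    Complex.exp (2 * Real.pi * Complex.I *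
      ((m : ℂ) * (x : ℂ) + (n : ℂ) * ((((x : ZMod c)⁻¹ : ZMod c).val : ℕ) : ℂ)) / (c : ℂ))

/-- The twisted Kloosterman sum `S_χ(m, n; c) = Σ_{x ∈ (ℤ/cℤ)ˣ} χ(x mod D) e((mx + n x̄)/c)`
for a Dirichlet character `χ` mod `D`. -/
noncomputable def klSumT {D : ℕ} (χ : DirichletCharacter ℂ D) (m n : ℤ) (c : ℕ) : ℂ :=
  ∑ x ∈ Finset.filter (fun x => Nat.Coprime x c) (Finset.range c),
    χ ((x : ℕ) : ZMod D) * Complex.exp (2 * Real.pi * Complex.I *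
      ((m : ℂ) * (x : ℂ) + (n : ℂ) * ((((x : ZMod c)⁻¹ : ZMod c).val : ℕ) : ℂ)) / (c : ℂ))

/-- The quadratic Dirichlet character mod a prime `D` (the Legendre symbol `(·/D)`),
with values in `ℂ`. -/
noncomputable def omegaChar (D : ℕ) (hD : D.Prime) : DirichletCharacter ℂ D :=
  letI : Fact D.Prime := ⟨hD⟩
  (quadraticChar (ZMod D)).ringHomComp (Int.castRingHom ℂ)

/-- `φ_k(m,n) = δ_{m,n} + 2π i^k Σ_{c > 0, D ∣ c} c⁻¹ S_ω(m,n;c) J_{k-1}(4π√(mn)/c)`. -/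
noncomputable def phiK (D : ℕ) (χ : DirichletCharacter ℂ D) (k m n : ℕ) : ℂ :=
  (if m = n then 1 else 0) +
    2 * Real.pi * Complex.I ^ k *
      ∑' c : {c : ℕ // 0 < c ∧ D ∣ c},
        ((c : ℕ) : ℂ)⁻¹ * klSumT χ m n c *
          ((besselJ ((k : ℝ) - 1) (4 * Real.pi * Real.sqrt ((m : ℝ) * n) / ((c : ℕ) : ℝ)) : ℝ) : ℂ)

/-- `Ψ_k^1(D) = 2π D^{-1/2} Σ_{ℓ ≥ 1, D ∤ ℓ} ℓ^{-1/2} σ₀(ℓ) |J_{k-1}(4π/ℓ)|`. -/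
noncomputable def Psi1 (k D : ℕ) : ℝ :=
  2 * Real.pi * (D : ℝ) ^ (-(1 / 2) : ℝ) *
    ∑' ℓ : {ℓ : ℕ // 0 < ℓ ∧ ¬ D ∣ ℓ},
      ((ℓ : ℕ) : ℝ) ^ (-(1 / 2) : ℝ) * ((ℓ : ℕ).divisors.card : ℝ) *
        |besselJ ((k : ℝ) - 1) (4 * Real.pi / ((ℓ : ℕ) : ℝ))|

/-- `Ψ_k^2(D) = 2π Σ_{m ≥ 1} (Dm)^{-1/2} (√D σ₀(Dm) + σ₀(D²m)) |J_{k-1}(4π/(Dm))|`. -/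
noncomputable def Psi2 (k D : ℕ) : ℝ :=
  2 * Real.pi *
    ∑' m : ℕ+,
      ((D : ℝ) * (m : ℕ)) ^ (-(1 / 2) : ℝ) *
        (Real.sqrt D * (((D * (m : ℕ)).divisors.card : ℝ)) + ((D ^ 2 * (m : ℕ)).divisors.card : ℝ)) *
        |besselJ ((k : ℝ) - 1) (4 * Real.pi / ((D : ℝ) * (m : ℕ)))|

/-- The Riemann zeta function at a real argument. -/
noncomputable def zetaR (s : ℝ) : ℝ := (riemannZeta (s : ℂ)).re

/-! The integral representation gives `|J_ν(x)| ≤ √π (x/2)^ν / Γ(ν + 1/2)`, so the `m`-th summand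
of `Ψ_k^2(D)` is at most `√π (2π/D)^{k-1} / Γ(k - 1/2)` times
`(Dm)^{-1/2} (√D σ₀(Dm) + σ₀(D²m)) m^{1-k}`. Since `σ₀(D^j m) ≤ (j + 1) σ₀(m)` and `√D ≥ 3/2`,
the divisor weight is at most `4 σ₀(m) m^{-1/2}`, and `Σ σ₀(m) m^{-s} = ζ(s)²` because
`σ₀ = 1 ⋆ 1`. -/

open Real

noncomputable def psi2Summand (k D : ℕ) (m : ℕ+) : ℝ :=
  ((D : ℝ) * (m : ℕ)) ^ (-(1 / 2) : ℝ) *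
    (√D * ((D * (m : ℕ)).divisors.card : ℝ) + ((D ^ 2 * (m : ℕ)).divisors.card : ℝ)) *
    |besselJ ((k : ℝ) - 1) (4 * π / ((D : ℝ) * (m : ℕ)))|

lemma Psi2_eq_tsum (k D : ℕ) : Psi2 k D = 2 * π * ∑' m, psi2Summand k D m := rfl

lemma norm_integral_sin_rpow_mul_cos_le {ν : ℝ} (hν : 0 ≤ ν) (x : ℝ) :
    ‖∫ θ in (0 : ℝ)..π / 2, sin θ ^ (2 * ν) * cos (x * cos θ)‖ ≤ π / 2 := by
  have hbound : ∀ θ ∈ Set.uIoc 0 (π / 2), ‖sin θ ^ (2 * ν) * cos (x * cos θ)‖ ≤ 1 := by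
    intro θ hθ
    rw [Set.uIoc_of_le (by positivity)] at hθ
    have hsin : 0 ≤ sin θ := sin_nonneg_of_nonneg_of_le_pi hθ.1.le (by linarith [hθ.2, pi_pos])
    rw [norm_mul, norm_of_nonneg (rpow_nonneg hsin _)]
    exact mul_le_one₀ (rpow_le_one hsin (sin_le_one θ) (by positivity)) (by positivity)
      (abs_cos_le_one _)
  simpa [abs_of_pos (by positivity : (0 : ℝ) < π / 2)] using
    intervalIntegral.norm_integral_le_of_norm_le_const hbound

theorem abs_besselJ_le {ν x : ℝ} (hν : 0 ≤ ν) (hx : 0 ≤ x) :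
    |besselJ ν x| ≤ √π / Gamma (ν + 1 / 2) * (x / 2) ^ ν := by
  have hΓ : 0 < Gamma (ν + 1 / 2) := Gamma_pos_of_pos (by positivity)
  have hsqrt : 0 < √π := sqrt_pos.mpr pi_pos
  rw [besselJ, Gamma_one_half_eq, abs_mul, abs_of_nonneg (by positivity)]
  calc 2 * (x / 2) ^ ν / (Gamma (ν + 1 / 2) * √π) * |∫ θ in (0 : ℝ)..π / 2,
        sin θ ^ (2 * ν) * cos (x * cos θ)|
      ≤ 2 * (x / 2) ^ ν / (Gamma (ν + 1 / 2) * √π) * (π / 2) := by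
        gcongr
        exact norm_integral_sin_rpow_mul_cos_le hν x
    _ = √π / Gamma (ν + 1 / 2) * (x / 2) ^ ν := by
        field_simp
        rw [sq_sqrt pi_pos.le]

theorem Nat.card_divisors_mul_le (m n : ℕ) :
    (m * n).divisors.card ≤ m.divisors.card * n.divisors.card := by
  rw [Nat.divisors_mul]
  exact Finset.card_mul_le

theorem Nat.card_divisors_prime_pow_mul_le {p : ℕ} (hp : p.Prime) (j m : ℕ) :
    (p ^ j * m).divisors.card ≤ (j + 1) * m.divisors.card := by
  simpa [← ArithmeticFunction.sigma_zero_apply, ArithmeticFunction.sigma_zero_apply_prime_pow hp]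
    using Nat.card_divisors_mul_le (p ^ j) m

lemma ofReal_zetaR {s : ℝ} (hs : 1 < s) : (zetaR s : ℂ) = riemannZeta s :=
  Complex.ext rfl (riemannZeta_im_eq_zero_of_one_lt hs).symm

open ArithmeticFunction LSeries.notation ArithmeticFunction.zeta in
theorem hasSum_card_divisors_mul_rpow_neg {s : ℝ} (hs : 1 < s) :
    HasSum (fun n : ℕ => (n.divisors.card : ℝ) * (n : ℝ) ^ (-s)) (zetaR s ^ 2) := by
  have hζ : LSeriesHasSum ↗ζ s (riemannZeta s) := LSeriesHasSum_zeta (by simpa using hs)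
  have hterm (n : ℕ) : LSeries.term (↗ζ ⍟ ↗ζ) s n = ((n.divisors.card * n ^ (-s) : ℝ) : ℂ) := by
    rcases eq_or_ne n 0 with rfl | hn
    · simp
    have hone : ∀ p ∈ n.divisorsAntidiagonal, ((ζ p.1 : ℕ) : ℂ) * ((ζ p.2 : ℕ) : ℂ) = 1 := by
      intro p hp
      obtain ⟨h1, h2⟩ := Nat.ne_zero_of_mem_divisorsAntidiagonal hp
      simp [h1, h2]
    rw [LSeries.term_of_ne_zero hn, LSeries.convolution_def]
    beta_reduce
    rw [Finset.sum_congr rfl hone, Finset.sum_const, ← Nat.map_div_right_divisors,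
      Finset.card_map]
    push_cast
    rw [Complex.ofReal_cpow (Nat.cast_nonneg _), Complex.ofReal_neg, Complex.cpow_neg,
      Complex.ofReal_natCast, div_eq_mul_inv, nsmul_one]
  have h := hζ.convolution hζ
  rw [LSeriesHasSum, funext hterm, ← ofReal_zetaR hs, ← Complex.ofReal_mul] at h
  simpa [sq] using Complex.hasSum_ofReal.mp h

lemma rpow_neg_half_mul_divisor_weight_le {D : ℕ} (hD : D.Prime) (hD3 : 3 ≤ D) (m : ℕ) :
    ((D : ℝ) * m) ^ (-(1 / 2) : ℝ) *
        (√D * ((D * m).divisors.card : ℝ) + ((D ^ 2 * m).divisors.card : ℝ)) ≤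
      4 * m.divisors.card * (m : ℝ) ^ (-(1 / 2) : ℝ) := by
  have hD0 : (0 : ℝ) < D := by positivity
  have hsqrtD : 0 < √(D : ℝ) := sqrt_pos.mpr hD0
  have hsqrtD_ge : (3 : ℝ) / 2 ≤ √(D : ℝ) := by
    rw [le_sqrt (by norm_num) hD0.le]
    have : (3 : ℝ) ≤ D := by exact_mod_cast hD3
    linarith
  have h1 : ((D * m).divisors.card : ℝ) ≤ 2 * m.divisors.card := by
    exact_mod_cast pow_one D ▸ Nat.card_divisors_prime_pow_mul_le hD 1 m
  have h2 : ((D ^ 2 * m).divisors.card : ℝ) ≤ 3 * m.divisors.card := by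
    exact_mod_cast Nat.card_divisors_prime_pow_mul_le hD 2 m
  have hweight : √D * ((D * m).divisors.card : ℝ) + ((D ^ 2 * m).divisors.card : ℝ) ≤
      4 * m.divisors.card * √D := by
    nlinarith [(by positivity : (0 : ℝ) ≤ m.divisors.card)]
  rw [mul_rpow hD0.le (Nat.cast_nonneg m), rpow_neg hD0.le, ← sqrt_eq_rpow]
  calc (√D)⁻¹ * (m : ℝ) ^ (-(1 / 2) : ℝ) *
        (√D * ((D * m).divisors.card : ℝ) + ((D ^ 2 * m).divisors.card : ℝ))
      = (m : ℝ) ^ (-(1 / 2) : ℝ) *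
          ((√D * ((D * m).divisors.card : ℝ) + ((D ^ 2 * m).divisors.card : ℝ)) / √D) := by
        ring
    _ ≤ (m : ℝ) ^ (-(1 / 2) : ℝ) * (4 * m.divisors.card) := by
        gcongr
        exact (div_le_iff₀ hsqrtD).mpr hweight
    _ = 4 * m.divisors.card * (m : ℝ) ^ (-(1 / 2) : ℝ) := mul_comm _ _

lemma abs_besselJ_four_pi_div_le {k : ℕ} (hk : 1 ≤ k) (D m : ℕ) :
    |besselJ ((k : ℝ) - 1) (4 * π / ((D : ℝ) * m))| ≤
      √π / Gamma ((k : ℝ) - 1 / 2) * (2 * π / D) ^ (k - 1) * (m : ℝ) ^ (-((k : ℝ) - 1)) := by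
  have hν : (k : ℝ) - 1 = ((k - 1 : ℕ) : ℝ) := by push_cast [hk]; ring
  have hx : 4 * π / ((D : ℝ) * m) / 2 = 2 * π / D * (m : ℝ)⁻¹ := by ring
  calc |besselJ ((k : ℝ) - 1) (4 * π / ((D : ℝ) * m))|
      ≤ √π / Gamma ((k : ℝ) - 1 + 1 / 2) * (4 * π / ((D : ℝ) * m) / 2) ^ ((k : ℝ) - 1) :=
        abs_besselJ_le (by rw [hν]; positivity) (by positivity)
    _ = √π / Gamma ((k : ℝ) - 1 / 2) * (2 * π / D) ^ (k - 1) * (m : ℝ) ^ (-((k : ℝ) - 1)) := by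
        rw [show (k : ℝ) - 1 + 1 / 2 = k - 1 / 2 by ring, hx,
          mul_rpow (by positivity) (by positivity), inv_rpow (Nat.cast_nonneg m),
          ← rpow_neg (Nat.cast_nonneg m), hν, rpow_natCast]
        ring_nf

lemma psi2Summand_le {k D : ℕ} (hk : 1 ≤ k) (hD : D.Prime) (hD3 : 3 ≤ D) (m : ℕ+) :
    psi2Summand k D m ≤ 4 * √π / Gamma ((k : ℝ) - 1 / 2) * (2 * π / D) ^ (k - 1) *
      ((m : ℕ).divisors.card * ((m : ℕ) : ℝ) ^ (-((k : ℝ) - 1 / 2))) := by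
  have hm : (0 : ℝ) < (m : ℕ) := by exact_mod_cast m.pos
  calc psi2Summand k D m
      ≤ (4 * (m : ℕ).divisors.card * ((m : ℕ) : ℝ) ^ (-(1 / 2) : ℝ)) *
          (√π / Gamma ((k : ℝ) - 1 / 2) * (2 * π / D) ^ (k - 1) *
            ((m : ℕ) : ℝ) ^ (-((k : ℝ) - 1))) :=
        mul_le_mul (rpow_neg_half_mul_divisor_weight_le hD hD3 m)
          (abs_besselJ_four_pi_div_le hk D m) (abs_nonneg _) (by positivity)
    _ = _ := by
        rw [show -((k : ℝ) - 1 / 2) = -(1 / 2) + -((k : ℝ) - 1) by ring, rpow_add hm]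
        ring

/-- For every integer `k ≥ 3` and prime `D ≥ 3`:
`Ψ_k^2(D) ≤ 8 π^{3/2} (2π/D)^{k−1} ζ(k−1/2)² / Γ(k−1/2)`. -/
theorem Psi2_le (k D : ℕ) (hk : 3 ≤ k) (hD : D.Prime) (hD3 : 3 ≤ D) :
    Psi2 k D ≤ 8 * Real.pi ^ ((3 : ℝ) / 2) * (2 * Real.pi / (D : ℝ)) ^ (k - 1) *
      zetaR ((k : ℝ) - 1 / 2) ^ 2 / Real.Gamma ((k : ℝ) - 1 / 2) := by
  set C := 4 * √π / Gamma ((k : ℝ) - 1 / 2) * (2 * π / D) ^ (k - 1)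
  have hs : 1 < (k : ℝ) - 1 / 2 := by
    have : (3 : ℝ) ≤ k := by exact_mod_cast hk
    linarith
  have hmajorant : HasSum
      (fun m : ℕ+ => C * ((m : ℕ).divisors.card * ((m : ℕ) : ℝ) ^ (-((k : ℝ) - 1 / 2))))
      (C * zetaR ((k : ℝ) - 1 / 2) ^ 2) :=
    (hasSum_pnat_iff (f := fun n : ℕ => (n.divisors.card : ℝ) * (n : ℝ) ^ (-((k : ℝ) - 1 / 2)))
      |>.mpr (by simpa using hasSum_card_divisors_mul_rpow_neg hs)).mul_left C
  have hbound := psi2Summand_le (k := k) (by omega) hD hD3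
  have hsum : ∑' m, psi2Summand k D m ≤ C * zetaR ((k : ℝ) - 1 / 2) ^ 2 :=
    hasSum_le hbound
      (hmajorant.summable.of_nonneg_of_le (fun m => by unfold psi2Summand; positivity)
        hbound).hasSum hmajorant
  have hpi : π ^ ((3 : ℝ) / 2) = π * √π := by
    rw [show (3 : ℝ) / 2 = 1 + 1 / 2 by norm_num, rpow_add pi_pos, rpow_one, sqrt_eq_rpow]
  calc Psi2 k D = 2 * π * ∑' m, psi2Summand k D m := Psi2_eq_tsum k D
    _ ≤ 2 * π * (C * zetaR ((k : ℝ) - 1 / 2) ^ 2) := by gcongr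
    _ = _ := by rw [hpi]; ring
end

section
/- Let D be a positive integer. For every odd integer k ≥ 7, one has 2π·D^{-1/2} · Σ_{ℓ > 6, D ∤ ℓ} ℓ^{-1/2} σ₀(ℓ) |J_{k-1}(4π/ℓ)| ≤ 0.04 · D^{-1/2}, and for k = 5 one has 2π·D^{-1/2} · Σ_{ℓ > 6, D ∤ ℓ} ℓ^{-1/2} σ₀(ℓ) |J_{4}(4π/ℓ)| ≤ 1.82 · D^{-1/2}. -/
open Real Finset
open scoped Nat

theorem integral_sin_pow_two_mul_eq_Gamma (n : ℕ) :
    ∫ θ in (0 : ℝ)..π / 2, sin θ ^ (2 * n) = Gamma (n + 1 / 2) * Gamma (1 / 2) / (2 * n !) := by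
  induction n with
  | zero =>
    rw [Nat.cast_zero, zero_add, Gamma_one_half_eq, mul_self_sqrt pi_nonneg]
    simp
  | succ n ih =>
    have hGamma : Gamma ((n + 1 : ℕ) + 1 / 2) = (n + 1 / 2) * Gamma (n + 1 / 2) := by
      rw [← Gamma_add_one (by positivity)]; push_cast; ring_nf
    rw [mul_add_one, integral_sin_pow, ih, hGamma, Nat.factorial_succ]
    simp only [sin_zero, cos_pi_div_two]
    push_cast
    field_simp
    ring

theorem abs_besselJ_natCast_le (n : ℕ) (x : ℝ) : |besselJ n x| ≤ |x / 2| ^ n / n ! := by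
  have hsin : ∀ θ, sin θ ^ (2 * (n : ℝ)) = sin θ ^ (2 * n) := fun θ => by
    rw [← rpow_natCast]; push_cast; rfl
  have hint : |∫ θ in (0 : ℝ)..π / 2, sin θ ^ (2 * n) * cos (x * cos θ)|
      ≤ ∫ θ in (0 : ℝ)..π / 2, sin θ ^ (2 * n) := by
    rw [← Real.norm_eq_abs]
    refine intervalIntegral.norm_integral_le_of_norm_le (by linarith [pi_pos])
      (Filter.Eventually.of_forall fun θ _ => ?_) ((continuous_sin.pow _).intervalIntegrable _ _)
    rw [Real.norm_eq_abs, abs_mul, abs_of_nonneg ((even_two_mul n).pow_nonneg _)]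
    exact mul_le_of_le_one_right ((even_two_mul n).pow_nonneg _) (abs_cos_le_one _)
  have hG₁ : 0 < Gamma (n + 1 / 2) := Gamma_pos_of_pos (by positivity)
  have hG₂ : 0 < Gamma (1 / 2) := Gamma_pos_of_pos (by norm_num)
  unfold besselJ
  simp only [hsin, rpow_natCast]
  rw [abs_mul, abs_div, abs_of_pos (mul_pos hG₁ hG₂), abs_mul, abs_two, abs_pow]
  calc _ ≤ 2 * |x / 2| ^ n / (Gamma (n + 1 / 2) * Gamma (1 / 2)) *
        ∫ θ in (0 : ℝ)..π / 2, sin θ ^ (2 * n) := by gcongr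
    _ = |x / 2| ^ n / n ! := by
      rw [integral_sin_pow_two_mul_eq_Gamma]
      field_simp

theorem abs_besselJ_natCast_le_of_le {p n : ℕ} (hpn : p ≤ n) {x : ℝ} (hx : |x / 2| ≤ 1) :
    |besselJ n x| ≤ |x / 2| ^ p / p ! :=
  (abs_besselJ_natCast_le n x).trans <| div_le_div₀ (by positivity)
    (pow_le_pow_of_le_one (abs_nonneg _) hx hpn) (by positivity) (mod_cast Nat.factorial_le hpn)

theorem Nat.card_divisors_le_two_mul_sqrt (n : ℕ) : #n.divisors ≤ 2 * n.sqrt := by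
  -- each divisor `d` is either at most `√n` or the cofactor of one that is
  have hsub : n.divisors ⊆ Icc 1 n.sqrt ∪ (Icc 1 n.sqrt).image (n / ·) := by
    intro d hd
    obtain ⟨hdn, hn⟩ := Nat.mem_divisors.1 hd
    have hd0 : 0 < d := Nat.pos_of_mem_divisors hd
    rcases le_or_gt d n.sqrt with hle | hlt
    · exact mem_union_left _ (mem_Icc.2 ⟨hd0, hle⟩)
    · refine mem_union_right _
        (mem_image.2 ⟨n / d, mem_Icc.2 ⟨?_, ?_⟩, Nat.div_div_self hdn hn⟩)
      · exact Nat.div_pos (Nat.divisor_le hd) hd0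
      · have hcof : d * (n / d) = n := Nat.mul_div_cancel' hdn
        have hlt' : n / d < d := by
          refine Nat.lt_of_mul_lt_mul_left (a := d) ?_
          rw [hcof]
          exact (Nat.lt_succ_sqrt n).trans_le (Nat.mul_self_le_mul_self hlt)
        exact Nat.le_sqrt.2 <|
          calc n / d * (n / d) ≤ d * (n / d) := Nat.mul_le_mul_right _ hlt'.le
            _ = n := hcof
  calc #n.divisors ≤ #(Icc 1 n.sqrt) + #((Icc 1 n.sqrt).image (n / ·)) :=
        (card_le_card hsub).trans (card_union_le _ _)
    _ ≤ n.sqrt + n.sqrt := by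
        gcongr
        · simp
        · exact Finset.card_image_le.trans (by simp)
    _ = 2 * n.sqrt := by ring

theorem rpow_neg_half_mul_card_divisors_le_two (n : ℕ) :
    (n : ℝ) ^ (-(1 / 2) : ℝ) * #n.divisors ≤ 2 := by
  have hcard : (#n.divisors : ℝ) ≤ 2 * √n :=
    calc (#n.divisors : ℝ) ≤ 2 * n.sqrt := mod_cast n.card_divisors_le_two_mul_sqrt
      _ ≤ 2 * √n := by gcongr; exact nat_sqrt_le_real_sqrt
  rw [rpow_neg n.cast_nonneg, ← sqrt_eq_rpow]
  calc (√n)⁻¹ * #n.divisors ≤ (√n)⁻¹ * (2 * √n) := by gcongr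
    _ = 2 * ((√n)⁻¹ * √n) := by ring
    _ ≤ 2 := by
      rcases (sqrt_nonneg (n : ℝ)).eq_or_lt with h | h
      · simp [← h]
      · rw [inv_mul_cancel₀ h.ne']; norm_num

theorem inv_pow_succ_le_sub (m : ℕ) {x : ℝ} (hx : 0 < x) :
    m / (x + 1) ^ (m + 1) ≤ 1 / x ^ m - 1 / (x + 1) ^ m := by
  have hbern : m * x ^ m ≤ x * ((x + 1) ^ m - x ^ m) := by
    have := one_add_mul_le_pow (a := x⁻¹) (by linarith [inv_pos.2 hx]) m
    calc (m : ℝ) * x ^ m = x * x ^ m * (1 + m * x⁻¹) - x * x ^ m := by field_simp; ring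
      _ ≤ x * x ^ m * (1 + x⁻¹) ^ m - x * x ^ m := by gcongr
      _ = x * ((x + 1) ^ m - x ^ m) := by
        rw [mul_assoc x, ← mul_pow, mul_add, mul_inv_cancel₀ hx.ne', mul_one]; ring
  have hmono : x ^ m ≤ (x + 1) ^ m := by gcongr; linarith
  rw [div_sub_div _ _ (by positivity) (by positivity),
    div_le_div_iff₀ (by positivity) (by positivity)]
  have hx1 : 0 ≤ (x + 1) ^ m := by positivity
  rw [pow_succ]
  nlinarith [mul_le_mul_of_nonneg_right hbern hx1, mul_nonneg (sub_nonneg.2 hmono) hx1]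

theorem sum_range_inv_pow_succ_le (N m : ℕ) (hN : 0 < N) (hm : 0 < m) (n : ℕ) :
    ∑ i ∈ range n, 1 / ((i + N + 1 : ℝ)) ^ (m + 1) ≤ 1 / (m * N ^ m) := by
  set f : ℕ → ℝ := fun i => 1 / (m * (i + N : ℝ) ^ m)
  calc ∑ i ∈ range n, 1 / ((i + N + 1 : ℝ)) ^ (m + 1) ≤ ∑ i ∈ range n, (f i - f (i + 1)) := by
        gcongr with i
        have hm' : (0 : ℝ) < m := mod_cast hm
        simp only [f]
        push_cast
        calc 1 / ((i + N + 1 : ℝ)) ^ (m + 1) = m / (i + N + 1 : ℝ) ^ (m + 1) / m := by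
              field_simp
          _ ≤ (1 / (i + N : ℝ) ^ m - 1 / (i + N + 1 : ℝ) ^ m) / m := by
              gcongr; exact inv_pow_succ_le_sub m (by positivity)
          _ = _ := by field_simp; ring
    _ = f 0 - f n := sum_range_sub' f n
    _ ≤ f 0 := by simp only [f]; linarith [show 0 ≤ 1 / (m * (n + N : ℝ) ^ m) by positivity]
    _ = 1 / (m * N ^ m) := by simp [f]

theorem tsum_subtype_lt_le_of_le_div_pow {N m : ℕ} (hN : 0 < N) (hm : 0 < m) (P : ℕ → Prop)
    {t : ℕ → ℝ} {C : ℝ} (ht₀ : ∀ ℓ, N < ℓ → 0 ≤ t ℓ) (ht : ∀ ℓ, N < ℓ → t ℓ ≤ C / ℓ ^ (m + 1)) :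
    ∑' ℓ : {ℓ : ℕ // N < ℓ ∧ P ℓ}, t ℓ ≤ C / (m * N ^ m) := by
  set g : ℕ → ℝ := fun n => 1 / ((n + N + 1 : ℝ)) ^ (m + 1)
  have hg₀ : ∀ n, 0 ≤ g n := fun n => by positivity
  have hg : Summable g := summable_of_sum_range_le hg₀ (sum_range_inv_pow_succ_le N m hN hm)
  have hC : 0 ≤ C := by
    have := (ht₀ (N + 1) N.lt_succ_self).trans (ht (N + 1) N.lt_succ_self)
    exact nonneg_of_mul_nonneg_left (div_eq_mul_inv C _ ▸ this) (by positivity)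
  set e : {ℓ : ℕ // N < ℓ ∧ P ℓ} → ℕ := fun ℓ => ℓ - (N + 1)
  have he : Function.Injective e := fun a b hab => Subtype.ext <| by
    have := a.2.1; have := b.2.1; simp only [e] at hab; omega
  have hte : ∀ ℓ : {ℓ : ℕ // N < ℓ ∧ P ℓ}, t ℓ ≤ C * g (e ℓ) := fun ℓ => by
    have hcast : ((e ℓ : ℕ) : ℝ) + N + 1 = ℓ := by
      simp only [e]; rw [Nat.cast_sub ℓ.2.1]; push_cast; ring
    simpa only [g, hcast, mul_one_div] using ht ℓ ℓ.2.1
  calc ∑' ℓ : {ℓ : ℕ // N < ℓ ∧ P ℓ}, t ℓ ≤ ∑' n, C * g n :=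
        Summable.tsum_le_tsum_of_inj e he (fun n _ => mul_nonneg hC (hg₀ n)) hte
          (((hg.mul_left C).comp_injective he).of_nonneg_of_le (fun ℓ => ht₀ ℓ ℓ.2.1) hte)
          (hg.mul_left C)
    _ = C * ∑' n, g n := tsum_mul_left
    _ ≤ C * (1 / (m * N ^ m)) := by
        gcongr; exact Real.tsum_le_of_sum_range_le hg₀ (sum_range_inv_pow_succ_le N m hN hm)
    _ = C / (m * N ^ m) := mul_one_div _ _

theorem abs_besselJ_four_pi_div_le_s14 {p n ℓ : ℕ} (hpn : p ≤ n) (hℓ : 6 < ℓ) :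
    |besselJ n (4 * π / ℓ)| ≤ (2 * π) ^ p / p ! / ℓ ^ p := by
  have hℓ' : (7 : ℝ) ≤ ℓ := mod_cast hℓ
  have hx : |4 * π / ℓ / 2| = 2 * π / ℓ := by
    rw [abs_of_pos (by positivity)]; ring
  have hx₁ : 2 * π / ℓ ≤ 1 := by
    rw [div_le_one (by positivity)]; linarith [pi_lt_d2]
  calc |besselJ n (4 * π / ℓ)| ≤ (2 * π / ℓ) ^ p / p ! :=
        hx ▸ abs_besselJ_natCast_le_of_le hpn (hx ▸ hx₁)
    _ = (2 * π) ^ p / p ! / ℓ ^ p := by ring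

theorem tsum_besselJ_tail_le (D m : ℕ) (hm : 0 < m) {ν C : ℝ}
    (hJ : ∀ ℓ : ℕ, 6 < ℓ → |besselJ ν (4 * π / ℓ)| ≤ C / ℓ ^ (m + 1)) :
    ∑' ℓ : {ℓ : ℕ // 6 < ℓ ∧ ¬ D ∣ ℓ},
        ((ℓ : ℕ) : ℝ) ^ (-(1 / 2) : ℝ) * #(ℓ : ℕ).divisors * |besselJ ν (4 * π / ℓ)|
      ≤ 2 * C / (m * 6 ^ m) :=
  tsum_subtype_lt_le_of_le_div_pow (by norm_num) hm _ (fun ℓ _ => by positivity) fun ℓ hℓ =>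
    calc (ℓ : ℝ) ^ (-(1 / 2) : ℝ) * #ℓ.divisors * |besselJ ν (4 * π / ℓ)|
        ≤ 2 * (C / ℓ ^ (m + 1)) :=
          mul_le_mul (rpow_neg_half_mul_card_divisors_le_two ℓ) (hJ ℓ hℓ) (abs_nonneg _) zero_le_two
      _ = 2 * C / ℓ ^ (m + 1) := by ring

theorem tail_sum_bounds_general (D : ℕ) :
    (∀ k : ℕ, 7 ≤ k → Odd k →
      2 * Real.pi * (D : ℝ) ^ (-(1 / 2) : ℝ) *
        ∑' ℓ : {ℓ : ℕ // 6 < ℓ ∧ ¬ D ∣ ℓ},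
          ((ℓ : ℕ) : ℝ) ^ (-(1 / 2) : ℝ) * ((ℓ : ℕ).divisors.card : ℝ) *
            |besselJ ((k : ℝ) - 1) (4 * Real.pi / ((ℓ : ℕ) : ℝ))|
        ≤ 0.04 * (D : ℝ) ^ (-(1 / 2) : ℝ)) ∧
    2 * Real.pi * (D : ℝ) ^ (-(1 / 2) : ℝ) *
        ∑' ℓ : {ℓ : ℕ // 6 < ℓ ∧ ¬ D ∣ ℓ},
          ((ℓ : ℕ) : ℝ) ^ (-(1 / 2) : ℝ) * ((ℓ : ℕ).divisors.card : ℝ) *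
            |besselJ (4 : ℝ) (4 * Real.pi / ((ℓ : ℕ) : ℝ))|
        ≤ 1.82 * (D : ℝ) ^ (-(1 / 2) : ℝ) := by
  have hD : 0 ≤ (D : ℝ) ^ (-(1 / 2) : ℝ) := rpow_nonneg D.cast_nonneg _
  have h2π : 2 * π ≤ 6.3 := by linarith [pi_lt_d2]
  refine ⟨fun k hk _ => ?_, ?_⟩
  · have hν : (k : ℝ) - 1 = ((k - 1 : ℕ) : ℝ) := by rw [Nat.cast_sub (by omega)]; simp
    have hJ := fun ℓ (hℓ : 6 < ℓ) =>
      hν ▸ abs_besselJ_four_pi_div_le_s14 (p := 6) (n := k - 1) (by omega) hℓ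
    calc _ ≤ 2 * π * (D : ℝ) ^ (-(1 / 2) : ℝ) * (2 * ((2 * π) ^ 6 / 6 !) / (5 * 6 ^ 5)) := by
          gcongr; exact tsum_besselJ_tail_le D 5 (by norm_num) hJ
      _ = (2 * π) ^ 7 / 13996800 * (D : ℝ) ^ (-(1 / 2) : ℝ) := by norm_num [Nat.factorial]; ring
      _ ≤ 0.04 * (D : ℝ) ^ (-(1 / 2) : ℝ) := by
          gcongr
          calc (2 * π) ^ 7 / 13996800 ≤ 6.3 ^ 7 / 13996800 := by gcongr
            _ ≤ 0.04 := by norm_num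
  · have hJ := fun ℓ (hℓ : 6 < ℓ) => abs_besselJ_four_pi_div_le_s14 (p := 4) (n := 4) le_rfl hℓ
    calc _ ≤ 2 * π * (D : ℝ) ^ (-(1 / 2) : ℝ) * (2 * ((2 * π) ^ 4 / 4 !) / (3 * 6 ^ 3)) := by
          gcongr; exact tsum_besselJ_tail_le D 3 (by norm_num) (by exact_mod_cast hJ)
      _ = (2 * π) ^ 5 / 7776 * (D : ℝ) ^ (-(1 / 2) : ℝ) := by norm_num [Nat.factorial]; ring
      _ ≤ 1.82 * (D : ℝ) ^ (-(1 / 2) : ℝ) := by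
          gcongr
          calc (2 * π) ^ 5 / 7776 ≤ 6.3 ^ 5 / 7776 := by gcongr
            _ ≤ 1.82 := by norm_num

/-- Tail bounds for the first sum in the proof of Proposition 8.3: for any positive
integer `D`, for every odd `k ≥ 7` one has
`2π D^{-1/2} Σ_{ℓ > 6, D ∤ ℓ} ℓ^{-1/2} σ₀(ℓ) |J_{k-1}(4π/ℓ)| ≤ 0.04 D^{-1/2}`,
and for `k = 5`,
`2π D^{-1/2} Σ_{ℓ > 6, D ∤ ℓ} ℓ^{-1/2} σ₀(ℓ) |J_4(4π/ℓ)| ≤ 1.82 D^{-1/2}`. -/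
theorem tail_sum_bounds (D : ℕ) (hD : 0 < D) :
    (∀ k : ℕ, 7 ≤ k → Odd k →
      2 * Real.pi * (D : ℝ) ^ (-(1 / 2) : ℝ) *
        ∑' ℓ : {ℓ : ℕ // 6 < ℓ ∧ ¬ D ∣ ℓ},
          ((ℓ : ℕ) : ℝ) ^ (-(1 / 2) : ℝ) * ((ℓ : ℕ).divisors.card : ℝ) *
            |besselJ ((k : ℝ) - 1) (4 * Real.pi / ((ℓ : ℕ) : ℝ))|
        ≤ 0.04 * (D : ℝ) ^ (-(1 / 2) : ℝ)) ∧
    2 * Real.pi * (D : ℝ) ^ (-(1 / 2) : ℝ) *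
        ∑' ℓ : {ℓ : ℕ // 6 < ℓ ∧ ¬ D ∣ ℓ},
          ((ℓ : ℕ) : ℝ) ^ (-(1 / 2) : ℝ) * ((ℓ : ℕ).divisors.card : ℝ) *
            |besselJ (4 : ℝ) (4 * Real.pi / ((ℓ : ℕ) : ℝ))|
        ≤ 1.82 * (D : ℝ) ^ (-(1 / 2) : ℝ) :=
  tail_sum_bounds_general D
end
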